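/- If a cubic graph G contains the graph T_K (two perfect binary trees of height K joined at the roots by an edge) as a subgraph, then G has two vertices at distance at least K, hence its diameter is at least K. -/

import Mathlib

/-!
In a cubic graph `G`, the image of a vertex of `T_K` that has three neighbours in `T_K` (any
vertex of depth `< K`) has no neighbour in `G` outside the copy of `T_K`. Since the depth changes
by at most one along an edge, a walk of length `< K` starting at the image of a root therefore only
visits images of vertices of depth `< K`, and never reaches the image of a leaf, of depth `K`.
-/

open scoped Classical

/-- The graph `T_K`: two disjoint perfect binary trees of height `K` (each with
`2^(K+1) - 1` vertices, numbered heap-style so that vertex number `i+1` has children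
numbered `2(i+1)` and `2(i+1)+1`, the root having number `1`), together with an edge
joining the two roots. -/
def TK (K : ℕ) : SimpleGraph (Bool × Fin (2 ^ (K + 1) - 1)) :=
  SimpleGraph.fromRel (fun a b =>
    (a.1 = b.1 ∧ ((b.2 : ℕ) + 1 = 2 * ((a.2 : ℕ) + 1) ∨
                  (b.2 : ℕ) + 1 = 2 * ((a.2 : ℕ) + 1) + 1)) ∨
    ((a.2 : ℕ) = 0 ∧ (b.2 : ℕ) = 0 ∧ a.1 ≠ b.1))

namespace SimpleGraph

variable {V W : Type*} {H : SimpleGraph V} {G : SimpleGraph W}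

theorem three_le_degree_of_adj {a x y z : V} [Fintype (H.neighborSet a)]
    (hx : H.Adj a x) (hy : H.Adj a y) (hz : H.Adj a z)
    (hxy : x ≠ y) (hxz : x ≠ z) (hyz : y ≠ z) : 3 ≤ H.degree a := by
  rw [← card_neighborFinset_eq_degree]
  calc 3 = ({x, y, z} : Finset V).card :=
        (Finset.card_eq_three.2 ⟨x, y, z, hxy, hxz, hyz, rfl⟩).symm
    _ ≤ _ := Finset.card_le_card (by simp [Finset.insert_subset_iff, hx, hy, hz])

theorem Copy.exists_adj_eq_of_degree_le (f : Copy H G) {a : V} [Fintype (H.neighborSet a)]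
    [Fintype (G.neighborSet (f a))] (hdeg : G.degree (f a) ≤ H.degree a) {x : W}
    (hx : G.Adj (f a) x) : ∃ b, H.Adj a b ∧ f b = x := by
  have hcard : Fintype.card (H.neighborSet a) = Fintype.card (G.neighborSet (f a)) := by
    refine le_antisymm (Fintype.card_le_of_embedding (f.mapNeighborSet a)) ?_
    simpa only [card_neighborSet_eq_degree] using hdeg
  obtain ⟨⟨b, hb⟩, hbx⟩ := ((Fintype.bijective_iff_injective_and_card _).2
    ⟨(f.mapNeighborSet a).injective, hcard⟩).2 ⟨x, hx⟩
  exact ⟨b, hb, congrArg Subtype.val hbx⟩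

def Hom.IsSaturatedBelow (f : H →g G) (r : V → ℕ) (K : ℕ) : Prop :=
  ∀ a, r a < K → ∀ x, G.Adj (f a) x → ∃ b, H.Adj a b ∧ f b = x

theorem Hom.IsSaturatedBelow.exists_eq_of_walk {f : H →g G} {r : V → ℕ} {K : ℕ}
    (hr : ∀ ⦃a b⦄, H.Adj a b → r b ≤ r a + 1)
    (hsat : f.IsSaturatedBelow r K) {u x : W} (p : G.Walk u x) :
    ∀ a, f a = u → r a + p.length ≤ K → ∃ b, f b = x ∧ r b ≤ r a + p.length := by
  induction p with
  | nil => exact fun a ha _ => ⟨a, ha, le_rfl⟩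
  | cons hadj q ih =>
    rintro a rfl hlen
    rw [Walk.length_cons] at hlen ⊢
    obtain ⟨b, hab, rfl⟩ := hsat a (by omega) _ hadj
    obtain ⟨c, hc, hcb⟩ := ih b rfl (by have := hr hab; omega)
    exact ⟨c, hc, by have := hr hab; omega⟩

theorem Copy.sub_le_edist (f : Copy H G) {r : V → ℕ} {K : ℕ}
    (hr : ∀ ⦃a b⦄, H.Adj a b → r b ≤ r a + 1)
    (hsat : f.toHom.IsSaturatedBelow r K) {a b : V} (hb : r b ≤ K) :
    ((r b - r a : ℕ) : ℕ∞) ≤ G.edist (f a) (f b) := by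
  refine le_iInf fun p => ?_
  by_cases hlen : r a + p.length ≤ K
  · obtain ⟨c, hc, hrc⟩ := hsat.exists_eq_of_walk hr p a rfl hlen
    rw [f.injective hc] at hrc
    exact_mod_cast (by omega : r b - r a ≤ p.length)
  · exact_mod_cast (by omega : r b - r a ≤ p.length)

end SimpleGraph

theorem Nat.log_eq_succ_of_div_eq {b m n : ℕ} (hb : 1 < b) (h : m / b = n) (hn : n ≠ 0) :
    Nat.log b m = Nat.log b n + 1 := by
  have hbm : b ≤ m := by
    by_contra! hmb
    exact hn (h ▸ Nat.div_eq_of_lt hmb)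
  have hpos : 0 < Nat.log b m := Nat.log_pos hb hbm
  rw [← h, Nat.log_div_base]
  omega

namespace TK

variable {K : ℕ}

def depth (a : Bool × Fin (2 ^ (K + 1) - 1)) : ℕ := Nat.log 2 (a.2 + 1)

theorem adj_of_div_two_eq (t : Bool) {i j : Fin (2 ^ (K + 1) - 1)}
    (h : ((j : ℕ) + 1) / 2 = i + 1) : (TK K).Adj (t, i) (t, j) := by
  rw [TK, SimpleGraph.fromRel_adj]
  refine ⟨fun hij => ?_, Or.inl (Or.inl ⟨rfl, by dsimp only; omega⟩)⟩
  have : (i : ℕ) = j := by rw [(Prod.mk.inj hij).2]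
  omega

theorem adj_roots {t : Bool} {i j : Fin (2 ^ (K + 1) - 1)} (hi : (i : ℕ) = 0)
    (hj : (j : ℕ) = 0) :
    (TK K).Adj (t, i) (!t, j) := by
  rw [TK, SimpleGraph.fromRel_adj]
  exact ⟨by simp, Or.inl (Or.inr ⟨hi, hj, by simp⟩)⟩

theorem depth_le_succ_of_adj ⦃a b : Bool × Fin (2 ^ (K + 1) - 1)⦄ (h : (TK K).Adj a b) :
    depth b ≤ depth a + 1 := by
  rw [TK, SimpleGraph.fromRel_adj] at h
  obtain ⟨-, (⟨-, h⟩ | ⟨ha, hb, -⟩) | (⟨-, h⟩ | ⟨hb, ha, -⟩)⟩ := h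
  · exact (Nat.log_eq_succ_of_div_eq one_lt_two (n := a.2 + 1) (by omega) (by omega)).le
  · simp [depth, ha, hb]
  · have := Nat.log_eq_succ_of_div_eq one_lt_two (m := a.2 + 1) (n := b.2 + 1)
      (by omega) (by omega)
    unfold depth
    omega
  · simp [depth, ha, hb]

theorem exists_depth_eq {d : ℕ} (hd : d ≤ K) :
    ∃ a : Bool × Fin (2 ^ (K + 1) - 1), depth a = d := by
  have : 2 ^ d ≤ 2 ^ K := Nat.pow_le_pow_right two_pos hd
  have : 1 ≤ 2 ^ d := Nat.one_le_two_pow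
  have : 2 ^ (K + 1) = 2 * 2 ^ K := pow_succ' 2 K
  refine ⟨(false, ⟨2 ^ d - 1, by omega⟩), ?_⟩
  simp only [depth, Nat.sub_add_cancel Nat.one_le_two_pow, Nat.log_pow one_lt_two]

/-- The root has the other root as its third neighbour, any other vertex its parent. -/
theorem exists_adj_up (t : Bool) (i : Fin (2 ^ (K + 1) - 1)) :
    ∃ u, (TK K).Adj (t, i) u ∧ (u.1 = t → u.2 < i) := by
  by_cases hi : (i : ℕ) = 0
  · exact ⟨(!t, i), adj_roots hi hi, by simp⟩
  · refine ⟨(t, ⟨((i : ℕ) + 1) / 2 - 1, by omega⟩), (adj_of_div_two_eq t ?_).symm,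
      fun _ => ?_⟩
    · simp only; omega
    · rw [Fin.lt_def]; simp only; omega

theorem three_le_degree {a : Bool × Fin (2 ^ (K + 1) - 1)} (h : depth a < K) :
    3 ≤ (TK K).degree a := by
  obtain ⟨t, i⟩ := a
  have hi : (i : ℕ) + 1 < 2 ^ K := Nat.lt_pow_of_log_lt one_lt_two h
  have : 2 ^ (K + 1) = 2 * 2 ^ K := pow_succ' 2 K
  obtain ⟨u, hu, hup⟩ := exists_adj_up t i
  let c₁ : Fin (2 ^ (K + 1) - 1) := ⟨2 * i + 1, by omega⟩
  let c₂ : Fin (2 ^ (K + 1) - 1) := ⟨2 * i + 2, by omega⟩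
  have hne : ∀ c, i < c → (t, c) ≠ u := by
    rintro c hc rfl
    exact (hup rfl).not_gt hc
  refine SimpleGraph.three_le_degree_of_adj (adj_of_div_two_eq t (j := c₁) ?_)
    (adj_of_div_two_eq t (j := c₂) ?_) hu ?_ (hne c₁ ?_) (hne c₂ ?_)
  all_goals simp only [c₁, c₂, ne_eq, Prod.mk.injEq, Fin.ext_iff, Fin.lt_def]; omega

end TK

theorem cubic_TK_subgraph_diam_ge_general (K n : ℕ)
    (G : SimpleGraph (Fin n)) (hcubic : ∀ v, G.degree v = 3)
    (f : Bool × Fin (2 ^ (K + 1) - 1) → Fin n) (hinj : Function.Injective f)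
    (hhom : ∀ a b, (TK K).Adj a b → G.Adj (f a) (f b)) :
    (∃ u v : Fin n, (K : ℕ∞) ≤ G.edist u v) ∧ (K : ℕ∞) ≤ G.ediam := by
  let F : (TK K).Copy G := ⟨⟨f, hhom _ _⟩, hinj⟩
  have hsat : F.toHom.IsSaturatedBelow TK.depth K := fun a ha _ hx =>
    F.exists_adj_eq_of_degree_le ((hcubic _).trans_le (TK.three_le_degree ha)) hx
  obtain ⟨root, hroot⟩ := TK.exists_depth_eq (K := K) K.zero_le
  obtain ⟨leaf, hleaf⟩ := TK.exists_depth_eq (K := K) le_rfl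
  have hdist : (K : ℕ∞) ≤ G.edist (f root) (f leaf) := by
    have h := F.sub_le_edist TK.depth_le_succ_of_adj hsat (a := root) hleaf.le
    rwa [hroot, hleaf, Nat.sub_zero] at h
  exact ⟨⟨_, _, hdist⟩, hdist.trans SimpleGraph.edist_le_ediam⟩

/-- If a cubic graph `G` contains `T_K` (two perfect binary trees of height `K` joined
at the roots by an edge) as a subgraph, then `G` has two vertices at distance at least
`K`; hence its diameter is at least `K`. -/
theorem cubic_TK_subgraph_diam_ge (K n : ℕ) (hK : 1 ≤ K)
    (G : SimpleGraph (Fin n)) (hcubic : ∀ v, G.degree v = 3)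
    (f : Bool × Fin (2 ^ (K + 1) - 1) → Fin n) (hinj : Function.Injective f)
    (hhom : ∀ a b, (TK K).Adj a b → G.Adj (f a) (f b)) :
    (∃ u v : Fin n, (K : ℕ∞) ≤ G.edist u v) ∧ (K : ℕ∞) ≤ G.ediam :=
  cubic_TK_subgraph_diam_ge_general K n G hcubic f hinj hhom
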